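/- Let 0 < s < ℓ, L = 2^ℓ, and x₀, x₁ ∈ [0, L). Write x_b = u_b·2^s + v_b with v_b ∈ [0, 2^s). Let x = (x₀ + x₁) mod L. Then the truncate-and-reduce value TR(x, s) := ⌊x / 2^s⌋ (an element of [0, 2^{ℓ-s})) satisfies TR(x, s) = (u₀ + u₁ + wrap(v₀, v₁, 2^s)) mod 2^{ℓ-s}. -/

import Mathlib

def wrap (a b M : ℕ) : ℕ := if M ≤ a + b then 1 else 0

theorem wrap_eq_add_div {a b M : ℕ} (ha : a < M) (hb : b < M) : wrap a b M = (a + b) / M := by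
  unfold wrap
  split_ifs with h
  · exact (Nat.div_eq_of_lt_le (by omega) (by omega)).symm
  · exact (Nat.div_eq_of_lt (by omega)).symm

theorem add_div_eq_add_add_wrap {k u₀ u₁ v₀ v₁ : ℕ} (hv₀ : v₀ < k) (hv₁ : v₁ < k) :
    (u₀ * k + v₀ + (u₁ * k + v₁)) / k = u₀ + u₁ + wrap v₀ v₁ k := by
  rw [wrap_eq_add_div hv₀ hv₁, show u₀ * k + v₀ + (u₁ * k + v₁) = v₀ + v₁ + (u₀ + u₁) * k by ring,
    Nat.add_mul_div_right _ _ (by omega), add_comm]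

theorem stmt3_general (ℓ s : ℕ) (hsl : s < ℓ)
    (x₀ x₁ u₀ u₁ v₀ v₁ x : ℕ)
    (hd₀ : x₀ = u₀ * 2 ^ s + v₀) (hd₁ : x₁ = u₁ * 2 ^ s + v₁)
    (hv₀ : v₀ < 2 ^ s) (hv₁ : v₁ < 2 ^ s)
    (hx : x = (x₀ + x₁) % 2 ^ ℓ) :
    x / 2 ^ s = (u₀ + u₁ + wrap v₀ v₁ (2 ^ s)) % 2 ^ (ℓ - s) := by
  have hℓ : 2 ^ ℓ = 2 ^ s * 2 ^ (ℓ - s) := by rw [← pow_add, Nat.add_sub_cancel' hsl.le]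
  rw [hx, hℓ, Nat.mod_mul_right_div_self, hd₀, hd₁, add_div_eq_add_add_wrap hv₀ hv₁]

theorem stmt3 (ℓ s : ℕ) (hs : 0 < s) (hsl : s < ℓ)
    (x₀ x₁ u₀ u₁ v₀ v₁ x : ℕ)
    (hx₀ : x₀ < 2 ^ ℓ) (hx₁ : x₁ < 2 ^ ℓ)
    (hd₀ : x₀ = u₀ * 2 ^ s + v₀) (hd₁ : x₁ = u₁ * 2 ^ s + v₁)
    (hv₀ : v₀ < 2 ^ s) (hv₁ : v₁ < 2 ^ s)
    (hx : x = (x₀ + x₁) % 2 ^ ℓ) :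
    x / 2 ^ s = (u₀ + u₁ + wrap v₀ v₁ (2 ^ s)) % 2 ^ (ℓ - s) :=
  stmt3_general ℓ s hsl x₀ x₁ u₀ u₁ v₀ v₁ x hd₀ hd₁ hv₀ hv₁ hx
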